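/- Let N ≥ 3 be an odd integer. Let x ∈ [0,1] be irrational, let k be an odd integer, and let p ≥ 0 be an integer with x + k/N^p ∈ [0,1]. Then there is no f ∈ F(N) with f(x) = x + k/N^p. -/

import Mathlib

/-- A real number is an `N`-adic rational if it equals `k / N^m` for some `k : ℤ`, `m : ℕ`. -/
def IsNAdic (N : ℕ) (x : ℝ) : Prop :=
  ∃ (k : ℤ) (m : ℕ), x = (k : ℝ) / (N : ℝ) ^ m

/-- Membership (as a map of `[0,1]`) in the generalized Thompson group `F(N)`:
`f 0 = 0`, `f 1 = 1`, and there is a finite partition `0 = a 0 < a 1 < ⋯ < a n = 1`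
of `[0,1]` by `N`-adic rationals such that on each piece `[a i, a (i+1)]` the map `f`
is affine with slope an integer power of `N`.  (Such an `f` is automatically an
increasing piecewise-linear homeomorphism of `[0,1]` onto itself, with all
non-differentiability points `N`-adic.) -/
def InFN (N : ℕ) (f : ℝ → ℝ) : Prop :=
  f 0 = 0 ∧ f 1 = 1 ∧
    ∃ (n : ℕ) (a : ℕ → ℝ), 0 < n ∧ a 0 = 0 ∧ a n = 1 ∧
      (∀ i < n, a i < a (i + 1)) ∧
      (∀ i ≤ n, IsNAdic N (a i)) ∧
      (∀ i < n, ∃ q : ℤ, ∀ x ∈ Set.Icc (a i) (a (i + 1)),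
        f x = f (a i) + (N : ℝ) ^ q * (x - a i))

/-
Write `D(t) = f t - t` for the displacement of `f ∈ F(N)` and `R = ℤ[1/N]` for the ring of
`N`-adic rationals. On a piece `[a, b]` of slope `N^q`, `D(t) = D(a) + (N^q - 1)(t - a)`.
Since `N` is odd, `N^q - 1 ∈ 2R`, so by induction along the breakpoints `D(a) ∈ 2R` at every
breakpoint `a`. At the irrational point `x`, on a piece of slope `N^q`: if `q = 0` then
`k / N^p = D(x) = D(a) ∈ 2R`, impossible for odd `k`; otherwise
`(N^q - 1) x = k / N^p - D(a) + (N^q - 1) a ∈ R ⊆ ℚ`, so `x` would be rational.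
-/

theorem exists_mem_Ico_of_mem_Ico {α : Type*} [LinearOrder α] {a : ℕ → α} {n : ℕ} {x : α}
    (hx : x ∈ Set.Ico (a 0) (a n)) : ∃ i < n, x ∈ Set.Ico (a i) (a (i + 1)) := by
  classical
  set i := Nat.findGreatest (fun i => a i ≤ x) n with hi
  have hai : a i ≤ x := Nat.findGreatest_spec (P := fun i => a i ≤ x) (Nat.zero_le n) hx.1
  have hin : i < n :=
    (Nat.findGreatest_le n).lt_of_ne fun h => (hai.trans_lt (by rw [hi, h]; exact hx.2)).false
  exact ⟨i, hin, hai, not_le.mp (Nat.findGreatest_is_greatest (Nat.lt_succ_self i) hin)⟩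

namespace NAdic

variable (N : ℕ) [NeZero N]

def subring : Subring ℝ where
  carrier := {x | IsNAdic N x}
  zero_mem' := ⟨0, 0, by simp⟩
  one_mem' := ⟨1, 0, by simp⟩
  add_mem' := by
    rintro _ _ ⟨a, m, rfl⟩ ⟨b, m', rfl⟩
    refine ⟨a * N ^ m' + b * N ^ m, m + m', ?_⟩
    have : (N : ℝ) ≠ 0 := Nat.cast_ne_zero.mpr (NeZero.ne N)
    field_simp
    push_cast
    ring
  mul_mem' := by
    rintro _ _ ⟨a, m, rfl⟩ ⟨b, m', rfl⟩
    exact ⟨a * b, m + m', by push_cast; ring⟩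
  neg_mem' := by
    rintro _ ⟨a, m, rfl⟩
    exact ⟨-a, m, by push_cast; ring⟩

variable {N}

theorem zpow_mem_subring (q : ℤ) : (N : ℝ) ^ q ∈ subring N := by
  obtain ⟨n, rfl | rfl⟩ := Int.eq_nat_or_neg q
  · exact ⟨N ^ n, 0, by simp⟩
  · exact ⟨1, n, by simp⟩

theorem exists_ratCast_eq {x : ℝ} (hx : x ∈ subring N) : ∃ r : ℚ, (r : ℝ) = x := by
  obtain ⟨a, m, rfl⟩ := hx
  exact ⟨a / N ^ m, by push_cast; rfl⟩

theorem notMem_subring_of_irrational {x : ℝ} (hx : Irrational x) : x ∉ subring N :=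
  fun h => hx (exists_ratCast_eq h)

theorem irrational_mul_notMem_subring {x t : ℝ} (hx : Irrational x) (ht : t ∈ subring N)
    (ht0 : t ≠ 0) : x * t ∉ subring N := by
  obtain ⟨r, rfl⟩ := exists_ratCast_eq ht
  exact notMem_subring_of_irrational (hx.mul_ratCast (by exact_mod_cast ht0))

theorem half_zpow_sub_one_mem_subring (hN : Odd N) (q : ℤ) :
    ((N : ℝ) ^ q - 1) / 2 ∈ subring N := by
  obtain ⟨c, hc⟩ : ∃ c : ℕ, (N : ℝ) ^ q.natAbs = 2 * c + 1 := by
    obtain ⟨c, hc⟩ := hN.pow (n := q.natAbs)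
    exact ⟨c, by exact_mod_cast hc⟩
  obtain ⟨n, rfl | rfl⟩ := Int.eq_nat_or_neg q
  · refine ⟨c, 0, ?_⟩
    simp only [Int.natAbs_natCast] at hc
    rw [zpow_natCast, hc]
    push_cast
    ring
  · refine ⟨-c, n, ?_⟩
    simp only [Int.natAbs_neg, Int.natAbs_natCast] at hc
    rw [zpow_neg, zpow_natCast, hc]
    field_simp
    push_cast
    ring

theorem half_odd_div_pow_notMem_subring (hN : Odd N) {k : ℤ} (hk : Odd k) (p : ℕ) :
    (k / (N : ℝ) ^ p) / 2 ∉ subring N := by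
  rintro ⟨b, m, hb⟩
  have hkb : k * (N : ℤ) ^ m = 2 * (b * N ^ p) := by
    have : (N : ℝ) ≠ 0 := Nat.cast_ne_zero.mpr (NeZero.ne N)
    rw [div_div, div_eq_div_iff (by positivity) (by positivity)] at hb
    have hb' : (k : ℝ) * N ^ m = 2 * (b * N ^ p) := by linear_combination hb
    exact_mod_cast hb'
  have hodd : Odd (k * (N : ℤ) ^ m) := hk.mul ((Int.odd_coe_nat N).mpr hN).pow
  exact Int.not_even_iff_odd.mpr hodd ⟨b * N ^ p, by rw [hkb]; ring⟩

end NAdic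

theorem half_displacement_mem_subring {N : ℕ} [NeZero N] (hN : Odd N) {f : ℝ → ℝ} {n : ℕ}
    {a : ℕ → ℝ} (h0 : f (a 0) = a 0) (hmono : ∀ i < n, a i ≤ a (i + 1))
    (ha : ∀ i ≤ n, IsNAdic N (a i))
    (hslope : ∀ i < n, ∃ q : ℤ, ∀ x ∈ Set.Icc (a i) (a (i + 1)),
      f x = f (a i) + (N : ℝ) ^ q * (x - a i)) :
    ∀ i ≤ n, (f (a i) - a i) / 2 ∈ NAdic.subring N := by
  intro i
  induction i with
  | zero => simp [h0]
  | succ i ih =>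
    intro hi
    have hi' : i < n := hi
    obtain ⟨q, hq⟩ := hslope i hi'
    have hstep : (f (a (i + 1)) - a (i + 1)) / 2 =
        (f (a i) - a i) / 2 + ((N : ℝ) ^ q - 1) / 2 * (a (i + 1) - a i) := by
      rw [hq _ ⟨hmono i hi', le_rfl⟩]
      ring
    rw [hstep]
    exact add_mem (ih hi'.le) (mul_mem (NAdic.half_zpow_sub_one_mem_subring hN q)
      (sub_mem (ha (i + 1) hi) (ha i hi'.le)))

theorem statement7 (N : ℕ) (hN : 3 ≤ N) (hNodd : Odd N)
    (x : ℝ) (hx : x ∈ Set.Icc (0 : ℝ) 1) (hxirr : Irrational x)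
    (k : ℤ) (hk : Odd k) (p : ℕ) :
    ¬ ∃ f : ℝ → ℝ, InFN N f ∧ f x = x + (k : ℝ) / (N : ℝ) ^ p := by
  have : NeZero N := ⟨by omega⟩
  rintro ⟨f, ⟨hf0, -, n, a, -, ha0, han, hlt, ha, hslope⟩, hfx⟩
  have hx1 : x < a n := han ▸ hx.2.lt_of_ne (by simpa using hxirr.ne_int 1)
  obtain ⟨i, hi, hxi⟩ := exists_mem_Ico_of_mem_Ico ⟨ha0 ▸ hx.1, hx1⟩
  have hdisp := half_displacement_mem_subring hNodd (by rw [ha0, hf0]) (fun j hj => (hlt j hj).le)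
    ha hslope i hi.le
  obtain ⟨q, hq⟩ := hslope i hi
  have hkx : (k : ℝ) / N ^ p = (f (a i) - a i) + ((N : ℝ) ^ q - 1) * (x - a i) := by
    linear_combination hq x (Set.Ico_subset_Icc_self hxi) - hfx
  by_cases hq0 : q = 0
  · refine NAdic.half_odd_div_pow_notMem_subring hNodd hk p ?_
    simpa [hkx, hq0] using hdisp
  · have hs : (N : ℝ) ^ q - 1 ∈ NAdic.subring N :=
      sub_mem (NAdic.zpow_mem_subring q) (one_mem _)
    have hs0 : (N : ℝ) ^ q - 1 ≠ 0 := by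
      rwa [sub_ne_zero, Ne, zpow_eq_one_iff_right₀ (by positivity) (by norm_cast; omega)]
    refine NAdic.irrational_mul_notMem_subring hxirr hs hs0 ?_
    have hxq : x * ((N : ℝ) ^ q - 1) =
        k / N ^ p - 2 * ((f (a i) - a i) / 2) + ((N : ℝ) ^ q - 1) * a i := by
      rw [hkx]
      ring
    rw [hxq]
    exact add_mem (sub_mem ⟨k, p, rfl⟩ (mul_mem (intCast_mem _ 2) hdisp))
      (mul_mem hs (ha i hi.le))
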